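/- Let k ≥ 2 be an integer and let s: ℝ → ℝ be a smooth, π/k-periodic function with 𝔯(θ) := s''(θ) + s(θ) > 0 for all θ and enclosed area (1/2)∫₀^{2π} s(θ)·𝔯(θ) dθ = π. Set c_k := (2k/π)·tan(π/(2k)). Then for every θ ∈ ℝ, 1/(π·√(c_k)) < s(θ) ≤ (π/2)·√(c_k). In particular s admits uniform lower and upper bounds depending only on k. -/

import Mathlib

/-!
The point of the curve with outer normal `u(a) = (cos a, sin a)` is
`x(a) = s(a) u(a) + s'(a) u'(a)`, and `⟪x(a), u(b)⟫ ≤ s(b)` whenever `|b - a| ≤ π`, because the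
difference is `∫_a^b 𝔯(t) sin(b - t) dt`. With `b = a + π` and `π`-periodicity this gives `s ≥ 0`.

By the `π/k`-symmetry, the area `π` is `2k` times the area `(1/2) ∫_ψ^{ψ+π/k} s 𝔯` of one sector.
If `ψ` is a minimum point, the sector between the tangency points `x(ψ)` and `x(ψ + π/k)` lies in
the kite cut out by the tangent lines there, of area `s(ψ)² tan(π/2k)`; hence `c_k s(ψ)² ≥ 1`.
If `ψ` is a maximum point, `s(φ) ≥ s(ψ) cos(φ - ψ)`, so the sector has area at least
`s(ψ)² sin(π/k) / 2`, and Jordan's inequality `k sin(π/2k) ≥ 1` gives `s(ψ)² ≤ (π/2)² c_k`.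
-/

open Real Set Filter MeasureTheory

noncomputable section

/-- Radius of curvature of the curve with support function `f`: `𝔯[f] = f'' + f`. -/
def rad (f : ℝ → ℝ) (θ : ℝ) : ℝ := iteratedDeriv 2 f θ + f θ

theorem Function.Periodic.intervalIntegral_zero_nat_mul {f : ℝ → ℝ} {T : ℝ}
    (hf : Function.Periodic f T) (hc : Continuous f) (n : ℕ) (a : ℝ) :
    ∫ x in 0..n * T, f x = n * ∫ x in a..a + T, f x := by
  have h := hf.intervalIntegral_add_zsmul_eq n 0 fun _ _ => hc.intervalIntegrable _ _
  rw [← hf.intervalIntegral_add_eq 0 a]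
  simpa using h

theorem Function.Periodic.exists_deriv_eq_zero_forall_le {f : ℝ → ℝ} {T : ℝ}
    (hf : Function.Periodic f T) (hT : T ≠ 0) (hc : Continuous f) :
    ∃ x, deriv f x = 0 ∧ ∀ y, f x ≤ f y := by
  obtain ⟨_, ⟨x, rfl⟩, hx⟩ := (hf.compact_of_continuous hT hc).exists_isLeast (range_nonempty f)
  have hmin : IsLocalMin f x := Eventually.of_forall fun y => hx ⟨y, rfl⟩
  exact ⟨x, hmin.deriv_eq_zero, fun y => hx ⟨y, rfl⟩⟩

theorem Function.Periodic.exists_deriv_eq_zero_forall_ge {f : ℝ → ℝ} {T : ℝ}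
    (hf : Function.Periodic f T) (hT : T ≠ 0) (hc : Continuous f) :
    ∃ x, deriv f x = 0 ∧ ∀ y, f y ≤ f x := by
  obtain ⟨_, ⟨x, rfl⟩, hx⟩ :=
    (hf.compact_of_continuous hT hc).exists_isGreatest (range_nonempty f)
  have hmax : IsLocalMax f x := Eventually.of_forall fun y => hx ⟨y, rfl⟩
  exact ⟨x, hmax.deriv_eq_zero, fun y => hx ⟨y, rfl⟩⟩

theorem Function.Periodic.deriv {𝕜 F : Type*} [NontriviallyNormedField 𝕜] [NormedAddCommGroup F]
    [NormedSpace 𝕜 F] {f : 𝕜 → F} {c : 𝕜} (h : Function.Periodic f c) :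
    Function.Periodic (deriv f) c := fun x => by
  rw [← deriv_comp_add_const, show (fun y => f (y + c)) = f from funext h]

theorem hasDerivAt_mul_abs (y : ℝ) : HasDerivAt (fun y => y * |y|) (2 * |y|) y :=
  hasDerivAt_of_hasDerivAt_of_ne' (g := fun y => 2 * |y|) (x := 0)
    (fun y hy => ((hasDerivAt_id' y).mul (hasDerivAt_abs hy)).congr_deriv (by
      rw [self_mul_sign]; ring)) (by fun_prop) (by fun_prop) y

section SupportFunction

variable {s : ℝ → ℝ}

theorem rad_eq_deriv_deriv_add (s : ℝ → ℝ) (θ : ℝ) : rad s θ = deriv (deriv s) θ + s θ := by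
  rw [rad, iteratedDeriv_succ, iteratedDeriv_one]

theorem Function.Periodic.rad {T : ℝ} (h : Function.Periodic s T) :
    Function.Periodic (rad s) T := fun θ => by
  simp only [rad_eq_deriv_deriv_add, h.deriv.deriv θ, h θ]

theorem continuous_rad (hs : ContDiff ℝ 2 s) : Continuous (rad s) :=
  (hs.continuous_iteratedDeriv 2 le_rfl).add hs.continuous

/-- `pointSupport s a b = ⟪x(a), u(b)⟫`: the support function of the single point `x(a)`. -/
def pointSupport (s : ℝ → ℝ) (a b : ℝ) : ℝ := s a * cos (b - a) + deriv s a * sin (b - a)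

theorem pointSupport_self (s : ℝ → ℝ) (a : ℝ) : pointSupport s a a = s a := by
  simp [pointSupport]

theorem pointSupport_add (s : ℝ → ℝ) (a b δ : ℝ) :
    pointSupport s a (b + δ) =
      pointSupport s a b * cos δ + pointSupport s a (b + π / 2) * sin δ := by
  simp only [pointSupport, add_sub_right_comm b, cos_add, sin_add, cos_pi_div_two, sin_pi_div_two]
  ring

theorem hasDerivAt_pointSupport (hs : ContDiff ℝ 2 s) (b φ : ℝ) :
    HasDerivAt (fun φ => pointSupport s φ b) (rad s φ * sin (b - φ)) φ := by
  have h₁ : HasDerivAt s (deriv s φ) φ :=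
    (hs.differentiable (by norm_num) φ).hasDerivAt
  have h₂ : HasDerivAt (deriv s) (deriv (deriv s) φ) φ :=
    ((hs.iterate_deriv' 1 1).differentiable one_ne_zero φ).hasDerivAt
  have hc : HasDerivAt (fun φ => cos (b - φ)) (sin (b - φ)) φ := by
    simpa using ((hasDerivAt_id φ).const_sub b).cos
  have hs' : HasDerivAt (fun φ => sin (b - φ)) (-cos (b - φ)) φ := by
    simpa using ((hasDerivAt_id φ).const_sub b).sin
  refine ((h₁.mul hc).add (h₂.mul hs')).congr_deriv ?_
  rw [rad_eq_deriv_deriv_add]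
  ring

theorem hasDerivAt_pointSupport_add_pi_div_two (hs : ContDiff ℝ 2 s) (b φ : ℝ) :
    HasDerivAt (fun φ => pointSupport s φ (b + π / 2)) (rad s φ * cos (b - φ)) φ := by
  have h := hasDerivAt_pointSupport hs (b + π / 2) φ
  rwa [add_sub_right_comm, sin_add_pi_div_two] at h

theorem sub_pointSupport_eq_integral (hs : ContDiff ℝ 2 s) (a b : ℝ) :
    s b - pointSupport s a b = ∫ t in a..b, rad s t * sin (b - t) := by
  rw [intervalIntegral.integral_eq_sub_of_hasDerivAt (fun t _ => hasDerivAt_pointSupport hs b t)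
    (((continuous_rad hs).mul (by fun_prop)).intervalIntegrable _ _), pointSupport_self]

theorem pointSupport_le (hs : ContDiff ℝ 2 s) (hrad : ∀ θ, 0 ≤ rad s θ) {a b : ℝ}
    (hab : |b - a| ≤ π) : pointSupport s a b ≤ s b := by
  rw [← sub_nonneg, sub_pointSupport_eq_integral hs]
  rcases le_total a b with hle | hle
  · refine intervalIntegral.integral_nonneg hle fun t ht => mul_nonneg (hrad t) ?_
    exact sin_nonneg_of_nonneg_of_le_pi (by linarith [ht.2])
      (by linarith [ht.1, (abs_le.1 hab).2])
  · rw [intervalIntegral.integral_symm, ← intervalIntegral.integral_neg]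
    refine intervalIntegral.integral_nonneg hle fun t ht => ?_
    have : sin (b - t) ≤ 0 :=
      sin_nonpos_of_nonpos_of_neg_pi_le (by linarith [ht.1]) (by linarith [ht.2, (abs_le.1 hab).1])
    nlinarith [hrad t]

theorem nonneg_of_periodic_pi (hs : ContDiff ℝ 2 s) (hrad : ∀ θ, 0 ≤ rad s θ)
    (hper : Function.Periodic s π) (θ : ℝ) : 0 ≤ s θ := by
  have h := pointSupport_le hs hrad (a := θ) (b := θ + π) (by simp [abs_of_pos pi_pos])
  simp only [pointSupport, add_sub_cancel_left, cos_pi, sin_pi, hper θ] at h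
  linarith

theorem nat_mul_integral_mul_rad_eq_integral (hs : ContDiff ℝ 2 s) {T : ℝ}
    (hper : Function.Periodic s T) {n : ℕ} (hn : n * T = 2 * π) (ψ : ℝ) :
    n * ∫ φ in ψ..ψ + T, s φ * rad s φ = ∫ φ in 0..2 * π, s φ * rad s φ := by
  rw [← hn]
  exact ((hper.mul hper.rad).intervalIntegral_zero_nat_mul
    (hs.continuous.mul (continuous_rad hs)) n ψ).symm

/-- The area element `s 𝔯 = X Y' - Y X'`, where `X, Y` are the coordinates of `x(φ)` in the
frame `u(ω), u'(ω)`. -/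
theorem mul_rad_eq_cross (s : ℝ → ℝ) (φ ω : ℝ) :
    s φ * rad s φ = pointSupport s φ ω * (rad s φ * cos (ω - φ))
      - pointSupport s φ (ω + π / 2) * (rad s φ * sin (ω - φ)) := by
  have h := pointSupport_add s φ ω (φ - ω)
  rw [add_sub_cancel, pointSupport_self] at h
  rw [← neg_sub φ ω, cos_neg, sin_neg]
  nth_rw 1 [h]
  ring

theorem sq_mul_sin_le_integral_mul_rad (hs : ContDiff ℝ 2 s) (hrad : ∀ θ, 0 ≤ rad s θ)
    {ψ T : ℝ} (hT₀ : 0 ≤ T) (hT : T ≤ π) (hψ : deriv s ψ = 0) (hsT : s (ψ + T) = s ψ)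
    (hψT : deriv s (ψ + T) = 0) :
    s ψ ^ 2 * sin T ≤ ∫ φ in ψ..ψ + T, s φ * rad s φ := by
  have hcont : Continuous fun φ => rad s φ * cos (ψ - φ) := (continuous_rad hs).mul (by fun_prop)
  have hint : ∫ φ in ψ..ψ + T, rad s φ * cos (ψ - φ) = s ψ * sin T := by
    rw [intervalIntegral.integral_eq_sub_of_hasDerivAt
      (fun φ _ => hasDerivAt_pointSupport_add_pi_div_two hs ψ φ) (hcont.intervalIntegrable _ _)]
    simp only [pointSupport, hsT, hψT, hψ, show ψ + π / 2 - (ψ + T) = π / 2 - T by ring,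
      add_sub_cancel_left, cos_pi_div_two_sub, cos_pi_div_two]
    ring
  calc s ψ ^ 2 * sin T = ∫ φ in ψ..ψ + T, s ψ * (rad s φ * cos (ψ - φ)) := by
        rw [intervalIntegral.integral_const_mul, hint]; ring
    _ ≤ ∫ φ in ψ..ψ + T, s φ * rad s φ := by
      refine intervalIntegral.integral_mono_on (by linarith)
        ((continuous_const.mul hcont).intervalIntegrable _ _)
        ((hs.continuous.mul (continuous_rad hs)).intervalIntegrable _ _) fun φ hφ => ?_
      have h := pointSupport_le hs hrad (a := ψ) (b := φ)
        (abs_le.2 ⟨by linarith [hφ.1], by linarith [hφ.2]⟩)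
      simp only [pointSupport, hψ, zero_mul, add_zero, ← neg_sub ψ φ, cos_neg] at h
      nlinarith [mul_le_mul_of_nonneg_right h (hrad φ)]

theorem integral_mul_rad_le_two_mul_sq_mul_tan (hs : ContDiff ℝ 2 s)
    (hrad : ∀ θ, 0 ≤ rad s θ) {ψ β : ℝ} (hβ₀ : 0 ≤ β) (hβ : β < π / 2)
    (hψ : deriv s ψ = 0) (hsβ : s (ψ + 2 * β) = s ψ) (hψβ : deriv s (ψ + 2 * β) = 0)
    (hs₀ : 0 ≤ s ψ) :
    ∫ φ in ψ..ψ + 2 * β, s φ * rad s φ ≤ 2 * s ψ ^ 2 * tan β := by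
  set ω := ψ + β
  set X := fun φ => pointSupport s φ ω
  set Y := fun φ => pointSupport s φ (ω + π / 2)
  have hc : 0 < cos β := cos_pos_of_mem_Ioo ⟨by linarith, hβ⟩
  have hsn : 0 ≤ sin β := sin_nonneg_of_nonneg_of_le_pi hβ₀ (by linarith)
  -- the curve lies on the inner side of the tangent lines at `x(ψ)` and `x(ψ + 2β)`
  have hXY : ∀ φ ∈ Icc ψ (ψ + 2 * β), X φ * cos β + sin β * |Y φ| ≤ s ψ := by
    intro φ hφ
    have h₁ := pointSupport_le hs hrad (a := φ) (b := ω + -β)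
      (abs_le.2 ⟨by linarith [hφ.2], by linarith [hφ.1]⟩)
    have h₂ := pointSupport_le hs hrad (a := φ) (b := ω + β)
      (abs_le.2 ⟨by linarith [hφ.2], by linarith [hφ.1]⟩)
    rw [pointSupport_add, cos_neg, sin_neg, show ω + -β = ψ by ring] at h₁
    rw [pointSupport_add, show ω + β = ψ + 2 * β by ring, hsβ] at h₂
    rcases abs_cases (Y φ) with ⟨h, -⟩ | ⟨h, -⟩ <;> rw [h] <;> simp only [X, Y] <;> linarith
  have hY' : ∀ φ ∈ Icc ψ (ψ + 2 * β), 0 ≤ rad s φ * cos (ω - φ) := fun φ hφ =>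
    mul_nonneg (hrad φ) (cos_nonneg_of_mem_Icc ⟨by linarith [hφ.2], by linarith [hφ.1]⟩)
  -- `g' y` is the abscissa at ordinate `y` of the boundary of the kite
  set g : ℝ → ℝ := fun y => (s ψ * y - sin β * (y * |y|) / 2) / cos β
  have hg : ∀ y, HasDerivAt g ((s ψ - sin β * |y|) / cos β) y := fun y =>
    ((((hasDerivAt_id' y).const_mul (s ψ)).sub (((hasDerivAt_mul_abs y).const_mul (sin β)).div_const
      2)).div_const (cos β)).congr_deriv (by ring)
  have hF : ∀ φ, HasDerivAt (fun φ => 2 * g (Y φ) - X φ * Y φ)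
      (2 * ((s ψ - sin β * |Y φ|) / cos β * (rad s φ * cos (ω - φ)))
        - (rad s φ * sin (ω - φ) * Y φ + X φ * (rad s φ * cos (ω - φ)))) φ := fun φ =>
    (((hg (Y φ)).comp φ (hasDerivAt_pointSupport_add_pi_div_two hs ω φ)).const_mul 2).sub
      ((hasDerivAt_pointSupport hs ω φ).mul (hasDerivAt_pointSupport_add_pi_div_two hs ω φ))
  refine (intervalIntegral.integral_le_sub_of_hasDeriv_right_of_le (by linarith)
    (fun φ _ => (hF φ).continuousAt.continuousWithinAt) (fun φ _ => (hF φ).hasDerivWithinAt)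
    ((hs.continuous.mul (continuous_rad hs)).integrableOn_Icc) fun φ hφ => ?_).trans_eq ?_
  · have hX : X φ ≤ (s ψ - sin β * |Y φ|) / cos β := by
      rw [le_div_iff₀ hc]
      linarith [hXY φ (Ioo_subset_Icc_self hφ)]
    show s φ * rad s φ ≤ _
    rw [mul_rad_eq_cross s φ ω]
    nlinarith [mul_le_mul_of_nonneg_right hX (hY' φ (Ioo_subset_Icc_self hφ))]
  · simp only [X, Y, g, ω, pointSupport, hψ, hψβ, hsβ, zero_mul, add_zero,
      show ψ + β - ψ = β by ring, show ψ + β + π / 2 - ψ = β + π / 2 by ring,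
      show ψ + β - (ψ + 2 * β) = -β by ring,
      show ψ + β + π / 2 - (ψ + 2 * β) = π / 2 - β by ring,
      cos_neg, cos_add_pi_div_two, cos_pi_div_two_sub, mul_neg, abs_neg,
      abs_of_nonneg (mul_nonneg hs₀ hsn), tan_eq_sin_div_cos]
    field_simp
    linear_combination (-2 * s ψ ^ 2 * sin β) * sin_sq_add_cos_sq β

end SupportFunction

theorem pi_div_two_mul_lt_pi_div_two {k : ℝ} (hk : 1 < k) : π / (2 * k) < π / 2 := by
  rw [div_lt_div_iff_of_pos_left pi_pos (by positivity) two_pos]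
  linarith

theorem one_div_pi_mul_sqrt_lt_of_pi_div_le {k m : ℝ} (hk : 0 < k) (hm : 0 ≤ m)
    (h : π / k ≤ 2 * m ^ 2 * tan (π / (2 * k))) :
    1 / (π * √(2 * k / π * tan (π / (2 * k)))) < m := by
  set c := 2 * k / π * tan (π / (2 * k))
  have hcm : 1 ≤ c * m ^ 2 := by
    have : c * m ^ 2 = k / π * (2 * m ^ 2 * tan (π / (2 * k))) := by ring
    rw [this, ← div_le_iff₀' (by positivity), one_div_div]
    exact h
  have hc : 0 < c := pos_of_mul_pos_left (one_pos.trans_le hcm) (sq_nonneg m)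
  have hsqrt : 1 ≤ √c * m := by
    have hsq : (√c * m) ^ 2 = c * m ^ 2 := by rw [mul_pow, sq_sqrt hc.le]
    nlinarith [mul_nonneg (sqrt_nonneg c) hm]
  calc 1 / (π * √c) < 1 / √c := by
        gcongr
        nlinarith [pi_gt_three, sqrt_pos.2 hc]
    _ ≤ m := by rwa [div_le_iff₀ (sqrt_pos.2 hc), mul_comm]

theorem le_pi_div_two_mul_sqrt_of_sq_mul_sin_le {k M : ℝ} (hk : 1 < k)
    (h : M ^ 2 * sin (π / k) ≤ π / k) :
    M ≤ π / 2 * √(2 * k / π * tan (π / (2 * k))) := by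
  set β := π / (2 * k) with hβdef
  have h2β : 2 * β = π / k := by rw [hβdef]; field_simp
  have hβ : 0 < β := by positivity
  have hβ' : β < π / 2 := pi_div_two_mul_lt_pi_div_two hk
  have hc : 0 < cos β := cos_pos_of_mem_Ioo ⟨by linarith, hβ'⟩
  have hjordan : 1 ≤ k * sin β := by
    have := mul_le_sin hβ.le hβ'.le
    rwa [show 2 / π * β = 1 / k by rw [hβdef]; field_simp, div_le_iff₀ (by linarith),
      mul_comm] at this
  have hsin : sin (π / k) = 2 * sin β * cos β := by
    rw [← sin_two_mul, h2β]
  have hM : M ^ 2 ≤ (π / 2) ^ 2 * (2 * k / π * tan β) := by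
    rw [hsin, le_div_iff₀ (by linarith)] at h
    have hrhs : (π / 2) ^ 2 * (2 * k / π * (sin β / cos β)) = π * k * sin β / (2 * cos β) := by
      field_simp
    rw [tan_eq_sin_div_cos, hrhs, le_div_iff₀ (by positivity)]
    nlinarith [mul_le_mul hjordan hjordan zero_le_one (by linarith)]
  calc M ≤ |M| := le_abs_self M
    _ ≤ √((π / 2) ^ 2 * (2 * k / π * tan β)) := abs_le_sqrt hM
    _ = π / 2 * √(2 * k / π * tan β) := by
      rw [sqrt_mul (by positivity), sqrt_sq (by positivity)]

/-- Let `k ≥ 2` and let `s` be a smooth, `π/k`-periodic support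
function with positive radius of curvature whose curve encloses area `π`. With
`c_k = (2k/π) tan(π/(2k))`, one has `1/(π√(c_k)) < s(θ) ≤ (π/2)√(c_k)` for all `θ`;
in particular `s` has uniform bounds depending only on `k`. -/
theorem support_function_bounds_of_symmetry
    (k : ℕ) (hk : 2 ≤ k) (s : ℝ → ℝ) (hsmooth : ContDiff ℝ (⊤ : ℕ∞) s)
    (hper : Function.Periodic s (π / k))
    (hconv : ∀ θ, 0 < rad s θ)
    (harea : (1 / 2) * ∫ θ in (0:ℝ)..(2 * π), s θ * rad s θ = π)
    (ck : ℝ) (hck : ck = (2 * k / π) * Real.tan (π / (2 * k))) :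
    ∀ θ : ℝ, 1 / (π * Real.sqrt ck) < s θ ∧ s θ ≤ (π / 2) * Real.sqrt ck := by
  have hs : ContDiff ℝ 2 s := hsmooth.of_le (WithTop.coe_le_coe.2 le_top)
  have hrad : ∀ θ, 0 ≤ rad s θ := fun θ => (hconv θ).le
  have hk₁ : (1 : ℝ) < k := by exact_mod_cast hk
  set β := π / (2 * k) with hβdef
  have h2β : 2 * β = π / k := by rw [hβdef]; field_simp
  have hβ : β < π / 2 := pi_div_two_mul_lt_pi_div_two hk₁
  replace hper : Function.Periodic s (2 * β) := by rwa [h2β]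
  have hπ := hper.nat_mul k
  rw [h2β, mul_div_cancel₀ π (by positivity)] at hπ
  have hs₀ := nonneg_of_periodic_pi hs hrad hπ
  have hsector : ∀ ψ, ∫ φ in ψ..ψ + 2 * β, s φ * rad s φ = π / k := fun ψ => by
    have h := nat_mul_integral_mul_rad_eq_integral hs hper (n := 2 * k)
      (by push_cast; rw [h2β]; field_simp) ψ
    rw [eq_div_iff (by positivity)]
    push_cast at h
    linarith
  obtain ⟨ψ₁, hψ₁, hmin⟩ := hper.exists_deriv_eq_zero_forall_le (by positivity) hs.continuous
  obtain ⟨ψ₂, hψ₂, hmax⟩ := hper.exists_deriv_eq_zero_forall_ge (by positivity) hs.continuous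
  intro θ
  subst hck
  refine ⟨(one_div_pi_mul_sqrt_lt_of_pi_div_le (by positivity) (hs₀ ψ₁) ?_).trans_le (hmin θ),
    (hmax θ).trans (le_pi_div_two_mul_sqrt_of_sq_mul_sin_le hk₁ ?_)⟩
  · simpa only [hsector] using integral_mul_rad_le_two_mul_sq_mul_tan hs hrad (by positivity) hβ
      hψ₁ (hper ψ₁) ((hper.deriv ψ₁).trans hψ₁) (hs₀ ψ₁)
  · have h := sq_mul_sin_le_integral_mul_rad hs hrad (by positivity) (by linarith) hψ₂ (hper ψ₂)
      ((hper.deriv ψ₂).trans hψ₂)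
    rwa [hsector, h2β] at h

end
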